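/- Let q ∈ ℂ with 0 < |q| < 1. The operators A, B, D on H satisfy the U_q(2) relations: BA = q·AB, A*B = q·BA*, BB* = B*B, AA* + BB* = 1, A*A + |q|²·B*B = 1, AD = DA, BD = (q²/|q|²)·DB, and DD* = D*D = 1, where * denotes the Hilbert-space adjoint. (Thus π is a *-representation of C(U_q(2)).) -/

import Mathlib

open scoped ComplexConjugate

noncomputable section

/-- The Hilbert space `H = ℓ²(ℕ × ℤ × ℤ)` over `ℂ`. -/
abbrev H : Type := lp (fun _ : ℕ × ℤ × ℤ => ℂ) 2

/-- The standard orthonormal basis vectors of `H`. -/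
noncomputable def e (i : ℕ × ℤ × ℤ) : H := lp.single 2 i 1

lemma e_apply (i j : ℕ × ℤ × ℤ) : (e i : ∀ _ : ℕ × ℤ × ℤ, ℂ) j = if j = i then 1 else 0 := by
  rw [e, lp.single_apply]
  split_ifs with h
  · subst h; simp
  · simp [h]

lemma coord_eq_inner (x : H) (j : ℕ × ℤ × ℤ) :
    (x : ∀ _ : ℕ × ℤ × ℤ, ℂ) j = @inner ℂ _ _ (e j) x := by
  rw [e, lp.inner_single_left]
  simp [RCLike.inner_apply]

lemma inner_e (i j : ℕ × ℤ × ℤ) :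
    (@inner ℂ _ _ (e i) (e j) : ℂ) = if i = j then 1 else 0 := by
  rw [← coord_eq_inner, e_apply]

/-- Two bounded operators agreeing on the basis vectors agree. -/
lemma ext_op {T S : H →L[ℂ] H} (h : ∀ i, T (e i) = S (e i)) : T = S := by
  refine ContinuousLinearMap.ext fun f => ?_
  have hs : HasSum (fun i : ℕ × ℤ × ℤ => lp.single 2 i ((f : ∀ _ : ℕ × ℤ × ℤ, ℂ) i)) f :=
    lp.hasSum_single (by norm_num) f
  have key : ∀ i : ℕ × ℤ × ℤ, lp.single 2 i ((f : ∀ _ : ℕ × ℤ × ℤ, ℂ) i) =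
      (f : ∀ _ : ℕ × ℤ × ℤ, ℂ) i • e i := by
    intro i
    rw [e, ← lp.single_smul]
    norm_num
  have h1 : HasSum (fun i : ℕ × ℤ × ℤ => (f : ∀ _ : ℕ × ℤ × ℤ, ℂ) i • T (e i)) (T f) := by
    have := hs.mapL T
    refine this.congr_fun fun i => ?_
    rw [key, map_smul]
  have h2 : HasSum (fun i : ℕ × ℤ × ℤ => (f : ∀ _ : ℕ × ℤ × ℤ, ℂ) i • T (e i)) (S f) := by
    have := hs.mapL S
    refine this.congr_fun fun i => ?_
    rw [key, map_smul, h i]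
  exact h1.unique h2

/-- Compute the adjoint on basis vectors. -/
lemma star_apply_e (T : H →L[ℂ] H) (i : ℕ × ℤ × ℤ) (y : H)
    (h : ∀ j, (@inner ℂ _ _ (T (e j)) (e i) : ℂ) = @inner ℂ _ _ (e j) y) :
    star T (e i) = y := by
  refine lp.ext (funext fun j => ?_)
  rw [coord_eq_inner, coord_eq_inner, ContinuousLinearMap.star_eq_adjoint,
    ContinuousLinearMap.adjoint_inner_right]
  exact h j

/-- the operators `A`, `B`, `D` of the defining representation of
`C(U_q(2))` (for `0 < |q| < 1`) satisfy the `U_q(2)` relations. -/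
theorem stmt0 (q : ℂ) (hq0 : 0 < ‖q‖) (hq1 : ‖q‖ < 1)
    (A B D : H →L[ℂ] H)
    (hA : ∀ (n : ℕ) (r s : ℤ), A (e (n, r, s)) =
      ((Real.sqrt (1 - ‖q‖ ^ (2 * (n + 1))) : ℝ) : ℂ) • e (n + 1, r, s))
    (hB : ∀ (n : ℕ) (r s : ℤ), B (e (n, r, s)) = (q ^ n) • e (n, r + 1, s))
    (hD : ∀ (n : ℕ) (r s : ℤ), D (e (n, r, s)) =
      ((conj q / (‖q‖ : ℂ)) ^ (2 * r)) • e (n, r, s + 1)) :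
    B * A = q • (A * B) ∧
    star A * B = q • (B * star A) ∧
    B * star B = star B * B ∧
    A * star A + B * star B = 1 ∧
    star A * A + ((‖q‖ : ℂ) ^ 2) • (star B * B) = 1 ∧
    A * D = D * A ∧
    B * D = (q ^ 2 / (‖q‖ : ℂ) ^ 2) • (D * B) ∧
    D * star D = 1 ∧ star D * D = 1 := by
  have hqne : q ≠ 0 := by
    intro h; rw [h] at hq0; simp at hq0
  have habsne : (‖q‖ : ℂ) ≠ 0 := by
    exact_mod_cast (Complex.ofReal_ne_zero).2 (ne_of_gt hq0)
  set α : ℕ → ℝ := fun n => Real.sqrt (1 - ‖q‖ ^ (2 * (n + 1))) with hα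
  have hαsq : ∀ n : ℕ, ((α n : ℝ) : ℂ) * ((α n : ℝ) : ℂ) =
      ((1 - ‖q‖ ^ (2 * (n + 1)) : ℝ) : ℂ) := by
    intro n
    rw [← Complex.ofReal_mul, hα]
    congr 1
    exact Real.mul_self_sqrt (by
      have : ‖q‖ ^ (2 * (n + 1)) ≤ 1 :=
        pow_le_one₀ hq0.le hq1.le
      linarith)
  -- adjoint of A
  have hAs0 : ∀ (r s : ℤ), star A (e (0, r, s)) = 0 := by
    intro r s
    apply star_apply_e
    rintro ⟨m, u, v⟩
    rw [hA, inner_smul_left, inner_e, inner_zero_right]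
    have : ((m + 1 : ℕ), u, v) ≠ ((0 : ℕ), r, s) := by
      simp [Prod.ext_iff]
    rw [if_neg this, mul_zero]
  have hAsS : ∀ (n : ℕ) (r s : ℤ), star A (e (n + 1, r, s)) = ((α n : ℝ) : ℂ) • e (n, r, s) := by
    intro n r s
    apply star_apply_e
    rintro ⟨m, u, v⟩
    rw [hA, inner_smul_left, inner_smul_right, inner_e, inner_e]
    have hiff : (((m + 1 : ℕ), u, v) = ((n + 1 : ℕ), r, s)) ↔ ((m, u, v) = ((n : ℕ), r, s)) := by
      constructor <;> (intro h; simp only [Prod.ext_iff] at h ⊢; exact ⟨by omega, h.2⟩)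
    rw [if_congr hiff rfl rfl]
    split_ifs with h
    · simp only [Prod.mk.injEq] at h
      obtain ⟨rfl, -, -⟩ := h
      rw [Complex.conj_ofReal]
    · simp
  -- adjoint of B
  have hBs : ∀ (n : ℕ) (r s : ℤ), star B (e (n, r, s)) = (conj (q ^ n)) • e (n, r - 1, s) := by
    intro n r s
    apply star_apply_e
    rintro ⟨m, u, v⟩
    rw [hB, inner_smul_left, inner_smul_right, inner_e, inner_e]
    have hiff : ((m, u + 1, v) = ((n : ℕ), r, s)) ↔ ((m, u, v) = ((n : ℕ), r - 1, s)) := by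
      constructor <;> (intro h; simp only [Prod.ext_iff] at h ⊢; exact ⟨h.1, by omega, h.2.2⟩)
    rw [if_congr hiff rfl rfl]
    split_ifs with h
    · simp only [Prod.mk.injEq] at h
      obtain ⟨rfl, -, -⟩ := h
      rfl
    · simp
  -- adjoint of D
  have hDs : ∀ (n : ℕ) (r s : ℤ), star D (e (n, r, s)) =
      (conj ((conj q / (‖q‖ : ℂ)) ^ (2 * r))) • e (n, r, s - 1) := by
    intro n r s
    apply star_apply_e
    rintro ⟨m, u, v⟩
    rw [hD, inner_smul_left, inner_smul_right, inner_e, inner_e]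
    have hiff : ((m, u, v + 1) = ((n : ℕ), r, s)) ↔ ((m, u, v) = ((n : ℕ), r, s - 1)) := by
      constructor <;> (intro h; simp only [Prod.ext_iff] at h ⊢; exact ⟨h.1, h.2.1, by omega⟩)
    rw [if_congr hiff rfl rfl]
    split_ifs with h
    · simp only [Prod.mk.injEq] at h
      obtain ⟨-, rfl, -⟩ := h
      rfl
    · simp
  have hmulconj : q * conj q = ((‖q‖ : ℂ)) ^ 2 := by
    rw [Complex.mul_conj, ← Complex.sq_norm]
    norm_cast
  have hunit : ∀ r : ℤ, conj ((conj q / (‖q‖ : ℂ)) ^ (2 * r)) *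
      (conj q / (‖q‖ : ℂ)) ^ (2 * r) = 1 := by
    intro r
    rw [← Complex.normSq_eq_conj_mul_self, Complex.normSq_eq_norm_sq]
    have habs : ‖(conj q / (‖q‖ : ℂ)) ^ (2 * r)‖ = 1 := by
      rw [norm_zpow, norm_div, Complex.norm_conj, Complex.norm_real, Real.norm_eq_abs, abs_of_pos hq0,
        div_self (ne_of_gt hq0), one_zpow]
    rw [habs]
    norm_num
  have hconjpow : ∀ n : ℕ, conj (q ^ n) * q ^ n = ((‖q‖ : ℂ)) ^ (2 * n) := by
    intro n
    rw [← Complex.normSq_eq_conj_mul_self, ← Complex.sq_norm, norm_pow, ← pow_mul]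
    push_cast
    ring_nf
  refine ⟨?_, ?_, ?_, ?_, ?_, ?_, ?_, ?_, ?_⟩
  · -- B A = q (A B)
    apply ext_op
    rintro ⟨n, r, s⟩
    simp only [ContinuousLinearMap.mul_apply, ContinuousLinearMap.smul_apply,
      hA, hB, map_smul, smul_smul]
    congr 1
    ring
  · -- A* B = q (B A*)
    apply ext_op
    rintro ⟨n, r, s⟩
    rcases n with _ | n
    · simp only [ContinuousLinearMap.mul_apply, ContinuousLinearMap.smul_apply,
        hB, hAs0, map_smul, map_zero, smul_zero, pow_zero, one_smul]
    · simp only [ContinuousLinearMap.mul_apply, ContinuousLinearMap.smul_apply,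
        hB, hAsS, map_smul, smul_smul]
      congr 1
      ring
  · -- B B* = B* B
    apply ext_op
    rintro ⟨n, r, s⟩
    simp only [ContinuousLinearMap.mul_apply, hB, hBs, map_smul, smul_smul,
      Int.sub_add_cancel, Int.add_sub_cancel]
    congr 1
    ring
  · -- A A* + B B* = 1
    apply ext_op
    rintro ⟨n, r, s⟩
    simp only [ContinuousLinearMap.add_apply, ContinuousLinearMap.mul_apply,
      ContinuousLinearMap.one_apply, hBs, map_smul, hB, Int.sub_add_cancel, smul_smul]
    rcases n with _ | n
    · rw [hAs0, map_zero]
      simp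
    · rw [hAsS, map_smul, hA, smul_smul, ← add_smul]
      have hc : ((α n : ℝ) : ℂ) * ((α n : ℝ) : ℂ) +
          conj (q ^ (n + 1)) * q ^ (n + 1) = 1 := by
        rw [hαsq n, hconjpow (n + 1)]
        push_cast
        ring
      rw [hc, one_smul]
  · -- A* A + |q|² B* B = 1
    apply ext_op
    rintro ⟨n, r, s⟩
    simp only [ContinuousLinearMap.add_apply, ContinuousLinearMap.mul_apply,
      ContinuousLinearMap.smul_apply, ContinuousLinearMap.one_apply, hA, map_smul, hAsS,
      hB, hBs, Int.add_sub_cancel, smul_smul, ← add_smul]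
    have hc : ((α n : ℝ) : ℂ) * ((α n : ℝ) : ℂ) +
        (‖q‖ : ℂ) ^ 2 * (q ^ n * conj (q ^ n)) = 1 := by
      rw [mul_comm (q ^ n), hαsq n, hconjpow n]
      push_cast
      ring
    rw [hc, one_smul]
  · -- A D = D A
    apply ext_op
    rintro ⟨n, r, s⟩
    simp only [ContinuousLinearMap.mul_apply, hA, hD, map_smul, smul_smul]
    congr 1
    ring
  · -- B D = (q²/|q|²) D B
    apply ext_op
    rintro ⟨n, r, s⟩
    simp only [ContinuousLinearMap.mul_apply, ContinuousLinearMap.smul_apply,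
      hB, hD, map_smul, smul_smul]
    congr 1
    have hw : (conj q / (‖q‖ : ℂ)) ≠ 0 := by
      apply div_ne_zero _ habsne
      simpa using hqne
    have hexp : 2 * (r + 1) = 2 * r + 2 := by ring
    rw [hexp, zpow_add₀ hw]
    have hkey : q ^ 2 / (‖q‖ : ℂ) ^ 2 *
        (conj q / (‖q‖ : ℂ)) ^ (2 : ℤ) = 1 := by
      rw [show ((2 : ℤ)) = ((2 : ℕ) : ℤ) from rfl, zpow_natCast, div_pow]
      field_simp
      rw [← mul_pow, hmulconj]
      ring
    linear_combination (-(q ^ n * (conj q / (‖q‖ : ℂ)) ^ (2 * r))) * hkey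
  · -- D D* = 1
    apply ext_op
    rintro ⟨n, r, s⟩
    simp only [ContinuousLinearMap.mul_apply, ContinuousLinearMap.one_apply, hDs, map_smul,
      hD, Int.sub_add_cancel, smul_smul]
    rw [hunit r, one_smul]
  · -- D* D = 1
    apply ext_op
    rintro ⟨n, r, s⟩
    simp only [ContinuousLinearMap.mul_apply, ContinuousLinearMap.one_apply, hD, map_smul,
      hDs, Int.add_sub_cancel, smul_smul]
    rw [mul_comm, hunit r, one_smul]
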